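/- Let D = (V,E) be a finite reflexive digraph admitting a nest ordering, with the intervals I_x = [a_x, b_x] and J_x = [α_x, β_x] defined by the stop-function construction. Then for all x, y ∈ V, xy ∈ E if and only if I_x ∩ J_y ≠ ∅. -/

import Mathlib

open scoped Classical

/-- The vertex set is identified with `{1, …, n} ⊆ ℤ` via the nest ordering. -/
def Vert (n : ℕ) (x : ℤ) : Prop := 1 ≤ x ∧ x ≤ (n : ℤ)

/-- The arc `uv` is symmetric: both `uv` and `vu` are arcs. -/
def SymArc (E : ℤ → ℤ → Prop) (u v : ℤ) : Prop := E u v ∧ E v u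

/-- The natural order of `{1, …, n}` is a nest ordering of the digraph `E`:
for all vertices `u ≤ v ≤ w ≤ z` (repetitions allowed),
properties (i), (ii), (iii) hold. -/
def NestOrdered (n : ℕ) (E : ℤ → ℤ → Prop) : Prop :=
  ∀ u v w z : ℤ, Vert n u → Vert n v → Vert n w → Vert n z →
    u ≤ v → v ≤ w → w ≤ z →
    ((E u w ∧ E u z → E u v ∨ (SymArc E v w ∧ SymArc E v z ∧ SymArc E w z)) ∧
     (E z u ∧ E z v → E z w ∨ (SymArc E w u ∧ SymArc E v u ∧ SymArc E w v)) ∧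
     (E u z ∧ E v w → E u w ∨ E v z) ∧
     (E z u ∧ E w v → E z v ∨ E w u) ∧
     (E u w ∧ E v z → E v w ∨ E u z) ∧
     (E z v ∧ E w u → E z u ∨ E w v))

/-- `σR x` is the least `z > x` that is not an out-neighbor of `x`
(the auxiliary isolated vertices `0` and `n+1` are not out-neighbors of anyone,
since all arcs of `E` join vertices of `{1, …, n}`). -/
def IsStopR (E : ℤ → ℤ → Prop) (σR : ℤ → ℤ) (x : ℤ) : Prop :=
  x < σR x ∧ ¬ E x (σR x) ∧ ∀ z : ℤ, x < z → ¬ E x z → σR x ≤ z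

/-- `σL x` is the greatest `z < x` that is not an out-neighbor of `x`. -/
def IsStopL (E : ℤ → ℤ → Prop) (σL : ℤ → ℤ) (x : ℤ) : Prop :=
  σL x < x ∧ ¬ E x (σL x) ∧ ∀ z : ℤ, z < x → ¬ E x z → z ≤ σL x

/-- `N⁺_R(x)`: the out-neighbors of `x` beyond `σR x`. -/
noncomputable def NRset (n : ℕ) (E : ℤ → ℤ → Prop) (σR : ℤ → ℤ) (x : ℤ) : Finset ℤ :=
  (Finset.Icc 1 (n : ℤ)).filter fun z => σR x < z ∧ E x z

/-- `N⁺_L(x)`: the out-neighbors of `x` before `σL x`. -/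
noncomputable def NLset (n : ℕ) (E : ℤ → ℤ → Prop) (σL : ℤ → ℤ) (x : ℤ) : Finset ℤ :=
  (Finset.Icc 1 (n : ℤ)).filter fun z => z < σL x ∧ E x z

/-- Left endpoint `a_x = σL x + 1/(2 + |N⁺_L(x)|)` of the interval `I_x`. -/
noncomputable def aEnd (n : ℕ) (E : ℤ → ℤ → Prop) (σL : ℤ → ℤ) (x : ℤ) : ℝ :=
  (σL x : ℝ) + 1 / (2 + ((NLset n E σL x).card : ℝ))

/-- Right endpoint `b_x = σR x − 1/(2 + |N⁺_R(x)|)` of the interval `I_x`. -/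
noncomputable def bEnd (n : ℕ) (E : ℤ → ℤ → Prop) (σR : ℤ → ℤ) (x : ℤ) : ℝ :=
  (σR x : ℝ) - 1 / (2 + ((NRset n E σR x).card : ℝ))

/-- Left endpoint `α_x = min({b_z : z < x, zx ∈ E} ∪ {x})` of the interval `J_x`. -/
noncomputable def alphaEnd (n : ℕ) (E : ℤ → ℤ → Prop) (σR : ℤ → ℤ) (x : ℤ) : ℝ :=
  (insert (x : ℝ)
      ((((Finset.Icc 1 (n : ℤ)).filter fun z => z < x ∧ E z x)).image (bEnd n E σR))).min'
    (Finset.insert_nonempty _ _)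

/-- Right endpoint `β_x = max({a_z : z > x, zx ∈ E} ∪ {x})` of the interval `J_x`. -/
noncomputable def betaEnd (n : ℕ) (E : ℤ → ℤ → Prop) (σL : ℤ → ℤ) (x : ℤ) : ℝ :=
  (insert (x : ℝ)
      ((((Finset.Icc 1 (n : ℤ)).filter fun z => x < z ∧ E z x)).image (aEnd n E σL))).max'
    (Finset.insert_nonempty _ _)

/-! For `x < y` the arc `xy` is decided by comparing `b_x` with `α_y`: if `xy ∉ E`, then
`b_x < σ_R(x) ≤ y`, and every in-neighbour `z < y` of `y` stops no earlier than `x`, that is,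
`σ_R(x) ≤ σ_R(z)`, with `N⁺_R(x) ⊊ N⁺_R(z)` (witnessed by `y`) when the stops coincide; the
nest ordering conditions are exactly what forces this, and either way `b_x < b_z`. The case
`y < x` is the mirror image under `x ↦ n + 1 - x`, which turns `σ_L, a, β` into `σ_R, b, α`. -/

lemma one_div_two_add_natCast_le_half (c : ℕ) : 1 / (2 + (c : ℝ)) ≤ 1 / 2 :=
  one_div_le_one_div_of_le two_pos (by simp)

lemma intCast_sub_one_div_lt_of_lt {s t : ℤ} (hst : s < t) (c d : ℕ) :
    (s : ℝ) - 1 / (2 + (c : ℝ)) < t - 1 / (2 + (d : ℝ)) := by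
  have hst' : (s : ℝ) + 1 ≤ t := by exact_mod_cast hst
  have := one_div_two_add_natCast_le_half d
  have : 0 < 1 / (2 + (c : ℝ)) := by positivity
  linarith

lemma sub_one_div_lt_sub_one_div_of_lt (s : ℝ) {c d : ℕ} (hcd : c < d) :
    s - 1 / (2 + (c : ℝ)) < s - 1 / (2 + (d : ℝ)) := by
  have : (c : ℝ) < d := by exact_mod_cast hcd
  gcongr

section StopR

variable {n : ℕ} {E : ℤ → ℤ → Prop} {σR : ℤ → ℤ}

lemma IsStopR.arc_of_lt_of_lt {x w : ℤ} (h : IsStopR E σR x) (hxw : x < w) (hw : w < σR x) :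
    E x w := by
  by_contra hn
  exact (h.2.2 w hxw hn).not_gt hw

lemma bEnd_lt_stop (x : ℤ) : bEnd n E σR x < σR x := by
  unfold bEnd
  have : 0 < 1 / (2 + ((NRset n E σR x).card : ℝ)) := by positivity
  linarith

lemma IsStopR.lt_bEnd {x : ℤ} (h : IsStopR E σR x) : (x : ℝ) < bEnd n E σR x := by
  have hxσ : (x : ℝ) + 1 ≤ σR x := by exact_mod_cast h.1
  have := one_div_two_add_natCast_le_half (NRset n E σR x).card
  unfold bEnd
  linarith

lemma bEnd_lt_bEnd_of_stop_lt {x z : ℤ} (h : σR x < σR z) : bEnd n E σR x < bEnd n E σR z :=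
  intCast_sub_one_div_lt_of_lt h _ _

lemma bEnd_lt_bEnd_of_card_lt {x z : ℤ} (h : σR x = σR z)
    (hc : (NRset n E σR x).card < (NRset n E σR z).card) : bEnd n E σR x < bEnd n E σR z := by
  unfold bEnd
  rw [h]
  exact sub_one_div_lt_sub_one_div_of_lt _ hc

lemma alphaEnd_le_self (y : ℤ) : alphaEnd n E σR y ≤ y :=
  Finset.min'_le _ _ (Finset.mem_insert_self _ _)

end StopR

section NestOrdered

variable {n : ℕ} {E : ℤ → ℤ → Prop}

lemma NestOrdered.arc_of_le_of_not_arc (hnest : NestOrdered n E) {z t x y : ℤ}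
    (hz : Vert n z) (ht : Vert n t) (hx : Vert n x) (hy : Vert n y)
    (hzt : z ≤ t) (htx : t ≤ x) (hxy : x ≤ y) (hzy : E z y) (hnxy : ¬ E x y) : E z t := by
  have hzx : E z x :=
    ((hnest z x y y hz hx hy hy (hzt.trans htx) hxy le_rfl).1 ⟨hzy, hzy⟩).resolve_right
      fun h => hnxy h.1.1
  exact ((hnest z t x y hz ht hx hy hzt htx hxy).1 ⟨hzx, hzy⟩).resolve_right
    fun h => hnxy h.2.2.1

lemma NestOrdered.arc_of_arc_of_not_arc (hnest : NestOrdered n E) {x y z w : ℤ}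
    (hx : Vert n x) (hy : Vert n y) (hz : Vert n z) (hw : Vert n w)
    (hxy : x < y) (hzy : z < y) (hxw : x < w) (hzw : z < w) (hwy : w ≠ y)
    (hEzy : E z y) (hnxy : ¬ E x y) (hExw : E x w) : E z w := by
  rcases hwy.lt_or_gt with hwy | hyw <;> rcases le_or_gt z x with hzx | hxz
  · exact ((hnest z x w y hz hx hw hy hzx hxw.le hwy.le).2.2.1 ⟨hEzy, hExw⟩).resolve_right hnxy
  · exact ((hnest x z w y hx hz hw hy hxz.le hzw.le hwy.le).2.2.2.2.1 ⟨hExw, hEzy⟩).resolve_right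
      hnxy
  · exact ((hnest z x y w hz hx hy hw hzx hxy.le hyw.le).2.2.2.2.1 ⟨hEzy, hExw⟩).resolve_left
      hnxy
  · exact ((hnest x z y w hx hz hy hw hxz.le hzy.le hyw.le).2.2.1 ⟨hExw, hEzy⟩).resolve_left hnxy

variable {σR : ℤ → ℤ}

lemma NestOrdered.stop_le_stop (hnest : NestOrdered n E) (hσR : ∀ x, Vert n x → IsStopR E σR x)
    {x y z : ℤ} (hx : Vert n x) (hy : Vert n y) (hz : Vert n z)
    (hxy : x < y) (hnxy : ¬ E x y) (hzy : E z y) (hσz : σR z < y) : σR x ≤ σR z := by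
  obtain ⟨hzσ, hnzσ, -⟩ := hσR z hz
  have hσ : Vert n (σR z) := ⟨by linarith [hz.1], by linarith [hy.2]⟩
  by_contra! hlt
  rcases le_or_gt (σR z) x with hσx | hxσ
  · exact hnzσ (hnest.arc_of_le_of_not_arc hz hσ hx hy hzσ.le hσx hxy.le hzy hnxy)
  · exact hnzσ (hnest.arc_of_arc_of_not_arc hx hy hz hσ hxy (hzσ.trans hσz) hxσ hzσ hσz.ne hzy
      hnxy ((hσR x hx).arc_of_lt_of_lt hxσ hlt))

lemma NestOrdered.NRset_subset (hnest : NestOrdered n E) (hσR : ∀ x, Vert n x → IsStopR E σR x)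
    {x y z : ℤ} (hx : Vert n x) (hy : Vert n y) (hz : Vert n z)
    (hxy : x < y) (hnxy : ¬ E x y) (hzy : z < y) (hEzy : E z y) (hσ : σR x = σR z) :
    NRset n E σR x ⊆ NRset n E σR z := by
  intro w hw
  simp only [NRset, Finset.mem_filter, Finset.mem_Icc] at hw ⊢
  obtain ⟨hwV, hσw, hExw⟩ := hw
  refine ⟨hwV, hσ ▸ hσw, hnest.arc_of_arc_of_not_arc hx hy hz hwV hxy hzy
    ((hσR x hx).1.trans hσw) ((hσR z hz).1.trans (hσ ▸ hσw)) (fun h => hnxy (h ▸ hExw)) hEzy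
    hnxy hExw⟩

lemma NestOrdered.bEnd_lt_bEnd (hnest : NestOrdered n E) (hσR : ∀ x, Vert n x → IsStopR E σR x)
    {x y z : ℤ} (hx : Vert n x) (hy : Vert n y) (hz : Vert n z)
    (hxy : x < y) (hnxy : ¬ E x y) (hzy : z < y) (hEzy : E z y) :
    bEnd n E σR x < bEnd n E σR z := by
  have hσxy : σR x ≤ y := (hσR x hx).2.2 y hxy hnxy
  rcases lt_or_gt_of_ne (fun h => (hσR z hz).2.1 (h ▸ hEzy) : σR z ≠ y) with hσz | hσz
  · rcases (hnest.stop_le_stop hσR hx hy hz hxy hnxy hEzy hσz).lt_or_eq with hlt | heq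
    · exact bEnd_lt_bEnd_of_stop_lt hlt
    · have hy_mem : y ∈ NRset n E σR z \ NRset n E σR x := by
        simp [NRset, Finset.mem_Icc.mpr hy, hσz, hEzy, hnxy]
      exact bEnd_lt_bEnd_of_card_lt heq (Finset.card_lt_card
        (Finset.ssubset_iff_of_subset (hnest.NRset_subset hσR hx hy hz hxy hnxy hzy hEzy heq)
          |>.mpr ⟨y, Finset.mem_sdiff.mp hy_mem⟩))
  · exact bEnd_lt_bEnd_of_stop_lt (hσxy.trans_lt hσz)

theorem NestOrdered.alphaEnd_le_bEnd_iff (hnest : NestOrdered n E)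
    (hσR : ∀ x, Vert n x → IsStopR E σR x) {x y : ℤ} (hx : Vert n x) (hy : Vert n y) :
    alphaEnd n E σR y ≤ bEnd n E σR x ↔ y ≤ x ∨ E x y := by
  rcases le_or_gt y x with hyx | hxy
  · refine iff_of_true ?_ (.inl hyx)
    calc alphaEnd n E σR y ≤ y := alphaEnd_le_self y
      _ ≤ x := by exact_mod_cast hyx
      _ ≤ bEnd n E σR x := (hσR x hx).lt_bEnd.le
  rw [or_iff_right hxy.not_ge]
  constructor
  · contrapose!
    intro hnxy
    simp only [alphaEnd, Finset.lt_min'_iff, Finset.forall_mem_insert, Finset.forall_mem_image,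
      Finset.mem_filter, Finset.mem_Icc]
    refine ⟨(bEnd_lt_stop x).trans_le (by exact_mod_cast (hσR x hx).2.2 y hxy hnxy),
      fun z ⟨hz, hzy, hEzy⟩ => hnest.bEnd_lt_bEnd hσR hx hy hz hxy hnxy hzy hEzy⟩
  · intro hExy
    exact Finset.min'_le _ _ (Finset.mem_insert_of_mem (Finset.mem_image_of_mem _
      (Finset.mem_filter.mpr ⟨Finset.mem_Icc.mpr hx, hxy, hExy⟩)))

end NestOrdered

lemma Finset.max'_image_sub_left (c : ℝ) (s : Finset ℝ) (hs : s.Nonempty) :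
    (s.image (c - ·)).max' (hs.image _) = c - s.min' hs := by
  refine le_antisymm (Finset.max'_le _ _ _ ?_)
    (Finset.le_max' _ _ (Finset.mem_image_of_mem _ (s.min'_mem hs)))
  simp only [Finset.mem_image, forall_exists_index, and_imp, forall_apply_eq_imp_iff₂]
  intro b hb
  linarith [s.min'_le b hb]

section Mirror

variable {n : ℕ}

def mirror (n : ℕ) (x : ℤ) : ℤ := n + 1 - x

def mirrorArcs (n : ℕ) (E : ℤ → ℤ → Prop) (u v : ℤ) : Prop := E (mirror n u) (mirror n v)

def mirrorStop (n : ℕ) (σ : ℤ → ℤ) (x : ℤ) : ℤ := mirror n (σ (mirror n x))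

@[simp]
lemma mirror_mirror (x : ℤ) : mirror n (mirror n x) = x := by
  simp [mirror]

lemma mirror_injective : Function.Injective (mirror n) :=
  Function.LeftInverse.injective mirror_mirror

lemma mirror_lt_iff {x y : ℤ} : mirror n x < y ↔ mirror n y < x := by
  unfold mirror; omega

lemma mirror_lt_mirror_iff {x y : ℤ} : mirror n x < mirror n y ↔ y < x := by
  unfold mirror; omega

lemma mirror_le_mirror_iff {x y : ℤ} : mirror n x ≤ mirror n y ↔ y ≤ x := by
  unfold mirror; omega

@[simp]
lemma cast_mirror (x : ℤ) : (mirror n x : ℝ) = n + 1 - x := by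
  simp [mirror]

lemma Vert.mirror {x : ℤ} (h : Vert n x) : Vert n (mirror n x) := by
  unfold Vert _root_.mirror at *; omega

lemma image_mirror_filter_Icc (p : ℤ → Prop) [DecidablePred p] :
    ((Finset.Icc 1 (n : ℤ)).filter p).image (mirror n) =
      (Finset.Icc 1 (n : ℤ)).filter fun z => p (mirror n z) := by
  ext z
  simp only [Finset.mem_image, Finset.mem_filter, Finset.mem_Icc]
  constructor
  · rintro ⟨w, hw, rfl⟩
    exact ⟨Vert.mirror hw.1, by simpa using hw.2⟩
  · intro hz
    exact ⟨mirror n z, ⟨Vert.mirror hz.1, hz.2⟩, mirror_mirror z⟩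

variable {E : ℤ → ℤ → Prop} {σL : ℤ → ℤ}

lemma NestOrdered.mirror (h : NestOrdered n E) : NestOrdered n (mirrorArcs n E) := by
  intro u v w z hu hv hw hz huv hvw hwz
  have := h _ _ _ _ hz.mirror hw.mirror hv.mirror hu.mirror (mirror_le_mirror_iff.mpr hwz)
    (mirror_le_mirror_iff.mpr hvw) (mirror_le_mirror_iff.mpr huv)
  obtain ⟨h1, h2, h3, h4, h5, h6⟩ := this
  exact ⟨fun ⟨a, b⟩ => (h2 ⟨b, a⟩).imp_right fun ⟨p, q, r⟩ => ⟨r, p, q⟩,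
    fun ⟨a, b⟩ => (h1 ⟨b, a⟩).imp_right fun ⟨p, q, r⟩ => ⟨q, r, p⟩,
    h4, h3, fun hh => (h6 hh).symm, fun hh => (h5 hh).symm⟩

lemma isStopR_mirrorStop {x : ℤ} (h : IsStopL E σL (mirror n x)) :
    IsStopR (mirrorArcs n E) (mirrorStop n σL) x := by
  obtain ⟨hlt, hn, hmax⟩ := h
  refine ⟨?_, by simpa [mirrorArcs, mirrorStop] using hn, fun z hxz hnz => ?_⟩
  · unfold mirrorStop mirror at *
    omega
  · have := hmax (mirror n z) (by unfold mirror at *; omega) hnz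
    unfold mirrorStop mirror at *
    omega

lemma NRset_mirror (x : ℤ) :
    NRset n (mirrorArcs n E) (mirrorStop n σL) (mirror n x) =
      (NLset n E σL x).image (mirror n) := by
  rw [NLset, image_mirror_filter_Icc, NRset]
  simp only [mirrorStop, mirrorArcs, mirror_mirror, mirror_lt_iff]

lemma aEnd_eq_sub_bEnd_mirror (x : ℤ) :
    aEnd n E σL x = n + 1 - bEnd n (mirrorArcs n E) (mirrorStop n σL) (mirror n x) := by
  rw [bEnd, NRset_mirror, Finset.card_image_of_injective _ mirror_injective, aEnd]
  simp only [mirrorStop, mirror_mirror, cast_mirror]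
  ring

lemma betaEnd_eq_sub_alphaEnd_mirror (y : ℤ) :
    betaEnd n E σL y = n + 1 - alphaEnd n (mirrorArcs n E) (mirrorStop n σL) (mirror n y) := by
  have hF : ((Finset.Icc 1 (n : ℤ)).filter fun z =>
      z < mirror n y ∧ mirrorArcs n E z (mirror n y)).image (mirror n) =
        (Finset.Icc 1 (n : ℤ)).filter fun z => y < z ∧ E z y := by
    rw [image_mirror_filter_Icc]
    simp only [mirrorArcs, mirror_mirror, mirror_lt_mirror_iff]
  have hb (z : ℤ) :
      (n + 1 : ℝ) - bEnd n (mirrorArcs n E) (mirrorStop n σL) z = aEnd n E σL (mirror n z) := by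
    rw [aEnd_eq_sub_bEnd_mirror, mirror_mirror]
  rw [alphaEnd, ← Finset.max'_image_sub_left]
  simp only [betaEnd, ← hF, Finset.image_insert, Finset.image_image, Function.comp_def, hb,
    cast_mirror, sub_sub_cancel]

lemma IsStopL.aEnd_lt {x : ℤ} (h : IsStopL E σL x) : aEnd n E σL x < x := by
  have hb : (mirror n x : ℝ) < bEnd n (mirrorArcs n E) (mirrorStop n σL) (mirror n x) :=
    (isStopR_mirrorStop (by rwa [mirror_mirror])).lt_bEnd
  rw [cast_mirror] at hb
  rw [aEnd_eq_sub_bEnd_mirror]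
  linarith

lemma self_le_betaEnd (y : ℤ) : (y : ℝ) ≤ betaEnd n E σL y :=
  Finset.le_max' _ _ (Finset.mem_insert_self _ _)

theorem NestOrdered.aEnd_le_betaEnd_iff (hnest : NestOrdered n E)
    (hσL : ∀ x, Vert n x → IsStopL E σL x) {x y : ℤ} (hx : Vert n x) (hy : Vert n y) :
    aEnd n E σL x ≤ betaEnd n E σL y ↔ x ≤ y ∨ E x y := by
  have hσR : ∀ x, Vert n x → IsStopR (mirrorArcs n E) (mirrorStop n σL) x :=
    fun x hx => isStopR_mirrorStop (hσL _ hx.mirror)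
  rw [aEnd_eq_sub_bEnd_mirror, betaEnd_eq_sub_alphaEnd_mirror, sub_le_sub_iff_left,
    hnest.mirror.alphaEnd_le_bEnd_iff hσR hx.mirror hy.mirror, mirror_le_mirror_iff]
  simp only [mirrorArcs, mirror_mirror]

end Mirror

theorem stop_construction_arc_iff_intersection_general
    (n : ℕ) (E : ℤ → ℤ → Prop)
    (hrefl : ∀ x, Vert n x → E x x)
    (hnest : NestOrdered n E)
    (σR σL : ℤ → ℤ)
    (hσR : ∀ x, Vert n x → IsStopR E σR x)
    (hσL : ∀ x, Vert n x → IsStopL E σL x) :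
    ∀ x y, Vert n x → Vert n y →
      (E x y ↔
        (Set.Icc (aEnd n E σL x) (bEnd n E σR x) ∩
          Set.Icc (alphaEnd n E σR y) (betaEnd n E σL y)).Nonempty) := by
  intro x y hx hy
  rw [Set.Icc_inter_Icc, Set.nonempty_Icc, max_le_iff, le_min_iff, le_min_iff,
    hnest.aEnd_le_betaEnd_iff hσL hx hy, hnest.alphaEnd_le_bEnd_iff hσR hx hy]
  have hab : aEnd n E σL x ≤ bEnd n E σR x := ((hσL x hx).aEnd_lt.trans (hσR x hx).lt_bEnd).le
  have hαβ : alphaEnd n E σR y ≤ betaEnd n E σL y := (alphaEnd_le_self y).trans (self_le_betaEnd y)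
  refine ⟨fun h => ⟨⟨hab, .inr h⟩, .inr h, hαβ⟩, ?_⟩
  rintro ⟨⟨-, hxy⟩, hyx, -⟩
  by_contra h
  exact h (le_antisymm (hxy.resolve_right h) (hyx.resolve_right h) ▸ hrefl x hx)

/-- For a finite reflexive digraph with a nest ordering, the intervals of the
stop-function construction realize the arcs: `xy ∈ E` iff `I_x ∩ J_y ≠ ∅`. -/
theorem stop_construction_arc_iff_intersection
    (n : ℕ) (E : ℤ → ℤ → Prop)
    (hdom : ∀ x y, E x y → Vert n x ∧ Vert n y)
    (hrefl : ∀ x, Vert n x → E x x)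
    (hnest : NestOrdered n E)
    (σR σL : ℤ → ℤ)
    (hσR : ∀ x, Vert n x → IsStopR E σR x)
    (hσL : ∀ x, Vert n x → IsStopL E σL x) :
    ∀ x y, Vert n x → Vert n y →
      (E x y ↔
        (Set.Icc (aEnd n E σL x) (bEnd n E σR x) ∩
          Set.Icc (alphaEnd n E σR y) (betaEnd n E σL y)).Nonempty) :=
  stop_construction_arc_iff_intersection_general n E hrefl hnest σR σL hσR hσL
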